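/- For an integer i ≥ 0, let π̄_i ∈ 𝔽_p[[T]] denote the coefficient-wise reduction of π_i(T) modulo p. Then E(π̄_i) = 1 + T^{p^i} in 𝔽_p[[T]], and π̄_i ∈ T^{p^i}·(1 + T·𝔽_p[[T]]); in particular the T-adic valuation of π̄_i equals p^i. -/

import Mathlib

/-!
Reducing `E(π_i) = (1 + T)^{p^i}` modulo `p` and applying Frobenius gives `Ē(π̄_i) = 1 + T^{p^i}`.
Since `Ē = 1 + T + T²(…)` and `π̄_i` has no constant term, `Ē(π̄_i) = 1 + π̄_i · v` with
`v ≡ 1 mod T`; hence `π̄_i · v = T^{p^i}`, and `π̄_i = T^{p^i} v⁻¹` with `v⁻¹ ≡ 1 mod T`.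
-/

open PowerSeries

noncomputable section

open scoped Classical in
/-- The series ℓ(T) = ∑_{i≥0} T^{p^i}/p^i over ℚ. -/
def lseries (p : ℕ) : PowerSeries ℚ :=
  PowerSeries.mk fun n => if ∃ i : ℕ, n = p ^ i then (n : ℚ)⁻¹ else 0

/-- Substitution `f(g)` of a power series `g` with zero constant coefficient
into a power series `f`. -/
def psComp {R : Type*} [CommSemiring R] (g f : PowerSeries R) : PowerSeries R :=
  PowerSeries.mk fun n =>
    ∑ k ∈ Finset.range (n + 1), PowerSeries.coeff k f * PowerSeries.coeff n (g ^ k)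

/-- The Artin–Hasse exponential E(T) = exp(∑ T^{p^i}/p^i) over ℚ. -/
def artinHasse (p : ℕ) : PowerSeries ℚ := psComp (lseries p) (PowerSeries.exp ℚ)

namespace PowerSeries

variable {R S : Type*} [CommRing R] [CommRing S]

theorem coeff_pow_eq_zero_of_lt {g : R⟦X⟧} (hg : constantCoeff g = 0) {n k : ℕ} (h : n < k) :
    coeff n (g ^ k) = 0 :=
  coeff_of_lt_order _ <| (Nat.cast_lt.mpr h).trans_le (le_order_pow_of_constantCoeff_eq_zero k hg)

theorem psComp_eq_subst {g : R⟦X⟧} (hg : constantCoeff g = 0) (f : R⟦X⟧) :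
    psComp g f = f.subst g := by
  ext n
  rw [psComp, coeff_mk, coeff_subst' (HasSubst.of_constantCoeff_zero' hg)]
  refine (finsum_eq_sum_of_support_subset _ fun k hk => Finset.mem_range.2 ?_).symm
  by_contra! hkn
  exact hk (by simp [coeff_pow_eq_zero_of_lt hg (Nat.lt_of_succ_le hkn)])

theorem map_psComp (φ : R →+* S) (g f : R⟦X⟧) :
    map φ (psComp g f) = psComp (map φ g) (map φ f) := by
  ext n
  simp [psComp, map_sum, ← map_pow]

theorem constantCoeff_psComp (g f : R⟦X⟧) : constantCoeff (psComp g f) = coeff 0 f := by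
  rw [← coeff_zero_eq_constantCoeff_apply]
  simp [psComp]

theorem psComp_eq_C_add_mul {g : R⟦X⟧} (hg : constantCoeff g = 0) (f : R⟦X⟧) :
    psComp g f = C (constantCoeff f) + g * psComp g (mk fun n => coeff (n + 1) f) := by
  have hs := HasSubst.of_constantCoeff_zero' hg
  rw [psComp_eq_subst hg, psComp_eq_subst hg]
  conv_lhs => rw [eq_X_mul_shift_add_const f]
  rw [subst_add hs, subst_mul hs, subst_X hs, subst_C, add_comm]
  rfl

theorem exists_eq_X_pow_mul_one_add_X_mul {g v : R⟦X⟧} {n : ℕ} (hv : constantCoeff v = 1)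
    (h : g * v = X ^ n) : ∃ u : R⟦X⟧, g = X ^ n * (1 + X * u) := by
  set w := invOfUnit v 1
  have hvw : v * w = 1 := mul_invOfUnit v 1 (by simp [hv])
  obtain ⟨u, hu⟩ : X ∣ w - 1 := by
    rw [X_dvd_iff, map_sub, constantCoeff_invOfUnit]; simp
  refine ⟨u, ?_⟩
  calc g = g * v * w := by rw [mul_assoc, hvw, mul_one]
    _ = X ^ n * (1 + X * u) := by rw [h, ← hu, add_sub_cancel]

theorem order_X_pow_mul_one_add_X_mul [IsDomain R] (n : ℕ) (u : R⟦X⟧) :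
    order (X ^ n * (1 + X * u)) = n := by
  have hunit : IsUnit (1 + X * u) := by
    rw [isUnit_iff_constantCoeff]; simp
  rw [order_mul, order_X_pow, order_zero_of_unit hunit, add_zero]

end PowerSeries

theorem coeff_zero_artinHasse (p : ℕ) : coeff 0 (artinHasse p) = 1 := by
  simp [artinHasse, psComp, coeff_exp]

theorem coeff_one_artinHasse (p : ℕ) : coeff 1 (artinHasse p) = 1 := by
  have : coeff 1 (lseries p) = 1 := by
    rw [lseries, coeff_mk, if_pos ⟨0, by simp⟩]
    norm_num
  simp [artinHasse, psComp, Finset.sum_range_succ, coeff_exp, this]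

variable (p : ℕ) [Fact p.Prime]

/-- The property that `Ep` is the Artin–Hasse exponential regarded as a power
series with coefficients in `ℤ_p` (its coefficients lie in `ℤ_(p) ⊆ ℤ_p`). -/
def IsArtinHasseZp (Ep : PowerSeries ℤ_[p]) : Prop :=
  PowerSeries.map (PadicInt.Coe.ringHom) Ep
    = PowerSeries.map (Rat.castHom ℚ_[p]) (artinHasse p)

/-- The property that `πfam i` is the power series `π_i(T) ∈ T·ℤ_p[[T]]`
with `E(π_i(T)) = (1+T)^{p^i}`. -/
def IsPiFamily (Ep : PowerSeries ℤ_[p]) (πfam : ℕ → PowerSeries ℤ_[p]) : Prop :=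
  ∀ i : ℕ, PowerSeries.constantCoeff (πfam i) = 0
    ∧ psComp (πfam i) Ep = (1 + X) ^ p ^ i

namespace IsArtinHasseZp

variable {p} {Ep : ℤ_[p]⟦X⟧}

theorem coe_coeff (hEp : IsArtinHasseZp p Ep) (n : ℕ) :
    ((coeff n Ep : ℤ_[p]) : ℚ_[p]) = ((coeff n (artinHasse p) : ℚ) : ℚ_[p]) := by
  have := congrArg (coeff n) hEp
  rwa [coeff_map, coeff_map] at this

theorem coeff_zero (hEp : IsArtinHasseZp p Ep) : coeff 0 Ep = 1 :=
  Subtype.coe_injective (by simpa [coeff_zero_artinHasse] using hEp.coe_coeff 0)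

theorem coeff_one (hEp : IsArtinHasseZp p Ep) : coeff 1 Ep = 1 :=
  Subtype.coe_injective (by simpa [coeff_one_artinHasse] using hEp.coe_coeff 1)

end IsArtinHasseZp

/-- let `π̄_i ∈ 𝔽_p[[T]]` be the coefficient-wise reduction of `π_i(T)`
modulo `p`.  Then `E(π̄_i) = 1 + T^{p^i}` in `𝔽_p[[T]]`, and
`π̄_i ∈ T^{p^i}·(1 + T·𝔽_p[[T]])`; in particular the `T`-adic valuation of `π̄_i`
equals `p^i`. -/
theorem statement6
    (Ep : PowerSeries ℤ_[p]) (hEp : IsArtinHasseZp p Ep)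
    (πfam : ℕ → PowerSeries ℤ_[p]) (hπ : IsPiFamily p Ep πfam) (i : ℕ) :
    psComp (PowerSeries.map (PadicInt.toZMod) (πfam i)) (PowerSeries.map (PadicInt.toZMod) Ep)
        = 1 + X ^ p ^ i
    ∧ (∃ u : PowerSeries (ZMod p),
        PowerSeries.map (PadicInt.toZMod) (πfam i) = X ^ p ^ i * (1 + X * u))
    ∧ (PowerSeries.map (PadicInt.toZMod) (πfam i)).order = (p ^ i : ℕ) := by
  set g := map PadicInt.toZMod (πfam i)
  set E := map PadicInt.toZMod Ep
  have hg : constantCoeff g = 0 := by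
    rw [← coeff_zero_eq_constantCoeff_apply, coeff_map, coeff_zero_eq_constantCoeff_apply,
      (hπ i).1, map_zero]
  have hEg : psComp g E = 1 + X ^ p ^ i := by
    have : CharP (ZMod p)⟦X⟧ p := charP_of_injective_algebraMap' (ZMod p) p
    rw [← map_psComp, (hπ i).2, map_pow, map_add, map_one, map_X, add_pow_char_pow, one_pow]
  set v := psComp g (mk fun n => coeff (n + 1) E)
  have hv : constantCoeff v = 1 := by simp [v, constantCoeff_psComp, E, hEp.coeff_one]
  have hgv : g * v = X ^ p ^ i := by
    have := hEg
    rwa [psComp_eq_C_add_mul hg, ← coeff_zero_eq_constantCoeff_apply, coeff_map, hEp.coeff_zero,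
      map_one, map_one, add_right_inj] at this
  obtain ⟨u, hu⟩ := exists_eq_X_pow_mul_one_add_X_mul hv hgv
  exact ⟨hEg, ⟨u, hu⟩, by rw [hu, order_X_pow_mul_one_add_X_mul]⟩

end
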